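/- For all n ≥ 3 and k ≥ 0, the set of suffixes of length f_n − 1 of elements of A_n equals the set of suffixes of length f_n − 1 of elements of A_{n+k}. -/

import Mathlib

/-- Sets of inflated random Fibonacci words: A₁ = {0}, A₂ = {1},
    Aₙ = Aₙ₋₁Aₙ₋₂ ∪ Aₙ₋₂Aₙ₋₁ for n ≥ 3 (A₀ = ∅). -/
def wordSet : ℕ → Set (List Bool)
  | 0 => ∅
  | 1 => {[false]}
  | 2 => {[true]}
  | (n + 3) => Set.image2 (· ++ ·) (wordSet (n + 2)) (wordSet (n + 1)) ∪
      Set.image2 (· ++ ·) (wordSet (n + 1)) (wordSet (n + 2))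

/-- Concatenation of sets of words: UV = {uv : u ∈ U, v ∈ V}. -/
def cat (U V : Set (List Bool)) : Set (List Bool) := Set.image2 (· ++ ·) U V

/-- W[a,b]: the set of segments wₐ…w_b (1-based indexing) of words in W. -/
def seg (W : Set (List Bool)) (a b : ℕ) : Set (List Bool) :=
  (fun w => (w.drop (a - 1)).take (b - a + 1)) '' W

/-- F(S, m): the set of all contiguous factors of length m of words in S. -/
def factorSet (S : Set (List Bool)) (m : ℕ) : Set (List Bool) :=
  {x | x.length = m ∧ ∃ w ∈ S, x <:+: w}

/-- Fₙ: the set of factors of length fₙ occurring in any inflated word. -/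
def Fn (n : ℕ) : Set (List Bool) := ⋃ m ≥ 1, factorSet (wordSet m) (Nat.fib n)


/-!
Write `L = f_n - 1`. The suffix of length `L` of `uv` only sees `v` once `|v| ≥ L`, so for
`m ≥ n` the suffixes of `A_{m+2} = A_{m+1}A_m ∪ A_mA_{m+1}` are those of `A_{m+1}` together with
those of `A_m`; by a two-step induction it suffices to compare `A_{n+1}` with `A_n`. In
`A_{n+1} = A_nA_{n-1} ∪ A_{n-1}A_n` the second part gives exactly the suffixes of `A_n`. In the
first part the suffix of `uv` is `u'v` where `u'` is the suffix of length `f_{n-2} - 1` of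
`u ∈ A_n`. By induction (at `n-2`, two steps up) `u'` is also the suffix of that length of some
`u'' ∈ A_{n-2}`, and then `u'v` is the suffix of `u''v ∈ A_{n-2}A_{n-1} ⊆ A_n`.
-/

namespace List

variable {α : Type*}

theorem rtake_append_of_le_length (u : List α) {v : List α} {n : ℕ} (h : n ≤ v.length) :
    (u ++ v).rtake n = v.rtake n := by
  rw [rtake, rtake, length_append,
    show u.length + v.length - n = u.length + (v.length - n) by omega, drop_length_add_append]

theorem rtake_append_of_length_le (u : List α) {v : List α} {n : ℕ} (h : v.length ≤ n) :
    (u ++ v).rtake n = u.rtake (n - v.length) ++ v := by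
  rw [rtake, rtake, length_append, drop_append_of_le_length (by omega)]
  congr 2
  omega

end List

section RTakeImage

variable {α : Type*}

theorem Set.Nonempty.image_rtake_zero {S : Set (List α)} (hS : S.Nonempty) :
    (·.rtake 0) '' S = {[]} := by
  simpa only [List.rtake_zero] using hS.image_const []

theorem image_rtake_image2_append_of_le_length {U V : Set (List α)} {n : ℕ} (hU : U.Nonempty)
    (hV : ∀ v ∈ V, n ≤ v.length) :
    (·.rtake n) '' Set.image2 (· ++ ·) U V = (·.rtake n) '' V := by
  rw [Set.image_image2]
  obtain ⟨u, hu⟩ := hU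
  refine subset_antisymm ?_ ?_
  · rintro _ ⟨u, -, v, hv, rfl⟩
    exact ⟨v, hv, (u.rtake_append_of_le_length (hV v hv)).symm⟩
  · rintro _ ⟨v, hv, rfl⟩
    exact ⟨u, hu, v, hv, u.rtake_append_of_le_length (hV v hv)⟩

theorem image_rtake_image2_append_of_length_eq {U V : Set (List α)} {n ℓ : ℕ}
    (hV : ∀ v ∈ V, v.length = ℓ) (hℓ : ℓ ≤ n) :
    (·.rtake n) '' Set.image2 (· ++ ·) U V =
      Set.image2 (· ++ ·) ((·.rtake (n - ℓ)) '' U) V := by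
  rw [Set.image_image2, Set.image2_image_left]
  refine Set.image2_congr fun u _ v hv => ?_
  rw [u.rtake_append_of_length_le (hV v hv ▸ hℓ), hV v hv]

end RTakeImage

theorem length_of_mem_wordSet {n : ℕ} {w : List Bool} (hw : w ∈ wordSet n) :
    w.length = Nat.fib n := by
  induction n using Nat.strong_induction_on generalizing w with
  | _ n ih =>
    match n with
    | 1 | 2 => rw [Set.mem_singleton_iff.mp hw]; rfl
    | m + 3 =>
      have hfib : Nat.fib (m + 3) = Nat.fib (m + 1) + Nat.fib (m + 2) := Nat.fib_add_two
      rcases hw with ⟨u, hu, v, hv, rfl⟩ | ⟨u, hu, v, hv, rfl⟩ <;>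
        rw [List.length_append, ih _ (by omega) hu, ih _ (by omega) hv] <;> omega

theorem wordSet_nonempty {n : ℕ} (hn : n ≠ 0) : (wordSet n).Nonempty := by
  induction n using Nat.strong_induction_on with
  | _ n ih =>
    match n with
    | 1 => exact ⟨[false], rfl⟩
    | 2 => exact ⟨[true], rfl⟩
    | m + 3 =>
      obtain ⟨u, hu⟩ := ih (m + 2) (by omega) (by omega)
      obtain ⟨v, hv⟩ := ih (m + 1) (by omega) (by omega)
      exact ⟨u ++ v, .inl ⟨u, hu, v, hv, rfl⟩⟩

theorem image_rtake_wordSet_add_three {m L : ℕ} (hL : L ≤ Nat.fib (m + 1)) :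
    (·.rtake L) '' wordSet (m + 3) =
      (·.rtake L) '' wordSet (m + 2) ∪ (·.rtake L) '' wordSet (m + 1) := by
  have hlong : ∀ j ≥ m + 1, ∀ v ∈ wordSet j, L ≤ v.length := fun j hj v hv =>
    (length_of_mem_wordSet hv).symm ▸ hL.trans (Nat.fib_mono hj)
  rw [wordSet, Set.image_union,
    image_rtake_image2_append_of_le_length (wordSet_nonempty (by omega)) (hlong _ le_rfl),
    image_rtake_image2_append_of_le_length (wordSet_nonempty (by omega)) (hlong _ (by omega)),
    Set.union_comm]

theorem image_rtake_wordSet_add_of_succ {n L : ℕ} (hn : n ≠ 0) (hL : L ≤ Nat.fib n)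
    (hsucc : (·.rtake L) '' wordSet (n + 1) = (·.rtake L) '' wordSet n) (k : ℕ) :
    (·.rtake L) '' wordSet (n + k) = (·.rtake L) '' wordSet n := by
  induction k using Nat.twoStepInduction with
  | zero => rfl
  | one => exact hsucc
  | more k ihk ihk1 =>
    have hsplit := image_rtake_wordSet_add_three (m := n + k - 1) (L := L)
      (hL.trans (Nat.fib_mono (by omega)))
    rw [show n + k - 1 + 3 = n + (k + 2) by omega, show n + k - 1 + 2 = n + (k + 1) by omega,
      show n + k - 1 + 1 = n + k by omega] at hsplit
    rw [hsplit, ihk1, ihk, Set.union_self]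

theorem image_rtake_wordSet_succ {n : ℕ} (hn : n ≠ 0) :
    (·.rtake (Nat.fib n - 1)) '' wordSet (n + 1) = (·.rtake (Nat.fib n - 1)) '' wordSet n := by
  induction n using Nat.strong_induction_on with
  | _ n ih =>
    match n with
    | 1 | 2 =>
      rw [show Nat.fib _ - 1 = 0 from rfl, (wordSet_nonempty (by omega)).image_rtake_zero,
        (wordSet_nonempty (by omega)).image_rtake_zero]
    | p + 3 =>
      have hfib : Nat.fib (p + 3) = Nat.fib (p + 1) + Nat.fib (p + 2) := Nat.fib_add_two
      have hpos : 0 < Nat.fib (p + 1) := Nat.fib_pos.mpr (by omega)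
      have hshort : ∀ v ∈ wordSet (p + 2), v.length = Nat.fib (p + 2) :=
        fun _ => length_of_mem_wordSet
      have hlong : ∀ v ∈ wordSet (p + 3), Nat.fib (p + 3) - 1 ≤ v.length := fun _ hv =>
        (length_of_mem_wordSet hv).symm ▸ Nat.sub_le _ _
      have hprefix : (·.rtake (Nat.fib (p + 1) - 1)) '' wordSet (p + 3) =
          (·.rtake (Nat.fib (p + 1) - 1)) '' wordSet (p + 1) :=
        image_rtake_wordSet_add_of_succ (by omega) (Nat.sub_le _ _)
          (ih (p + 1) (by omega) (by omega)) 2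
      have hrest : Nat.fib (p + 3) - 1 - Nat.fib (p + 2) = Nat.fib (p + 1) - 1 := by omega
      rw [show p + 3 + 1 = (p + 1) + 3 from rfl, wordSet, Set.image_union,
        image_rtake_image2_append_of_le_length (wordSet_nonempty (by omega)) hlong,
        Set.union_eq_right]
      calc (·.rtake (Nat.fib (p + 3) - 1)) '' Set.image2 (· ++ ·) (wordSet (p + 3))
            (wordSet (p + 2))
          _ = Set.image2 (· ++ ·) ((·.rtake (Nat.fib (p + 1) - 1)) '' wordSet (p + 3))
                (wordSet (p + 2)) := by
            rw [image_rtake_image2_append_of_length_eq hshort (by omega), hrest]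
          _ = Set.image2 (· ++ ·) ((·.rtake (Nat.fib (p + 1) - 1)) '' wordSet (p + 1))
                (wordSet (p + 2)) := by
            rw [hprefix]
          _ = (·.rtake (Nat.fib (p + 3) - 1)) '' Set.image2 (· ++ ·) (wordSet (p + 1))
                (wordSet (p + 2)) := by
            rw [image_rtake_image2_append_of_length_eq hshort (by omega), hrest]
          _ ⊆ (·.rtake (Nat.fib (p + 3) - 1)) '' wordSet (p + 3) :=
            Set.image_mono Set.subset_union_right

theorem stmt9 (n k : ℕ) (hn : 3 ≤ n) :
    (fun w : List Bool => w.drop (w.length - (Nat.fib n - 1))) '' wordSet n =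
      (fun w : List Bool => w.drop (w.length - (Nat.fib n - 1))) '' wordSet (n + k) :=
  (image_rtake_wordSet_add_of_succ (by omega) (Nat.sub_le _ _)
    (image_rtake_wordSet_succ (by omega)) k).symm
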